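/- Let μ be a finite Radon measure on ℝ³ with Lebesgue decomposition μ = μ_ac + μ_sc + μ_pp, where μ_pp is the atomic part. Then for every q ∈ (1,∞], limsup_{t→0} t^{(3/2)(1−1/q)} ‖e^{tΔ}μ‖_{L^q(ℝ³)} ≤ C ‖μ_pp‖_{𝓜(ℝ³)} for a constant C depending only on q. -/

import Mathlib

open MeasureTheory ENNReal Filter

/-- The squared Euclidean distance `|x - y|²` in `ℝ³`. -/
noncomputable def sqdist (x y : ℝ × ℝ × ℝ) : ℝ :=
  (x.1 - y.1) ^ 2 + (x.2.1 - y.2.1) ^ 2 + (x.2.2 - y.2.2) ^ 2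

/-- The heat extension `e^{tΔ}μ(x) = (4πt)^{-3/2} ∫ exp(-|x-y|²/(4t)) dμ(y)`. -/
noncomputable def heatExt (μ : Measure (ℝ × ℝ × ℝ)) (t : ℝ) (x : ℝ × ℝ × ℝ) : ℝ :=
  (4 * Real.pi * t) ^ (-(3 : ℝ) / 2) * ∫ y, Real.exp (-(sqdist x y) / (4 * t)) ∂μ

/-- A measure is purely atomic if it is a countable sum of weighted Dirac masses. -/
def IsPurelyAtomic (ν : Measure (ℝ × ℝ × ℝ)) : Prop :=
  ∃ (s : ℕ → ℝ × ℝ × ℝ) (c : ℕ → ℝ≥0∞), ν = Measure.sum fun n => c n • Measure.dirac (s n)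

/-
Split `μ = ν + μ_pp`. For every finite measure `σ` the heat extension satisfies
`‖e^{tΔ}σ‖₁ = σ(ℝ³)` and `t^{3/2} ‖e^{tΔ}σ‖_∞ ≤ σ(ℝ³)`, so the `L¹`–`L^∞` interpolation
`‖u‖_q ≤ ‖u‖_∞^{1-1/q} ‖u‖₁^{1/q}` bounds `t^{(3/2)(1-1/q)} ‖e^{tΔ}σ‖_q` by `σ(ℝ³)`; applied to
`μ_pp` this gives the constant `C = 1`. For the atomless part the `L^∞` bound improves to `o(1)`:
a finite atomless measure on a Polish space gives mass `≤ ε` to all balls of some radius `r`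
(tightness and a Lebesgue number), and off that ball the Gaussian is `≤ exp(-r²/(4t))`. Since
`1 - 1/q > 0`, the `L^q` contribution of `ν` then tends to `0`.
-/

open Metric Topology

namespace ENNReal

lemma one_div_toReal_le_one {q : ℝ≥0∞} (hq : 1 ≤ q) : 1 / q.toReal ≤ 1 := by
  rcases eq_or_ne q ∞ with rfl | hq_top
  · simp
  · exact div_le_one_of_le₀ (by simpa using toReal_mono hq_top hq) toReal_nonneg

lemma one_div_toReal_lt_one {q : ℝ≥0∞} (hq : 1 < q) : 1 / q.toReal < 1 := by
  rcases eq_or_ne q ∞ with rfl | hq_top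
  · simp
  · have hp : 1 < q.toReal := by simpa using toReal_strict_mono hq_top hq
    exact (div_lt_one (by linarith)).2 hp

end ENNReal

section Interpolation

variable {α E : Type*} {m : MeasurableSpace α} {μ : Measure α} [NormedAddCommGroup E]

/-- For `q = ∞` the exponents read `1` and `0`, since `∞.toReal = 0` and `1 / 0 = 0`. -/
theorem eLpNorm_le_eLpNormEssSup_rpow_mul_eLpNorm_one_rpow {f : α → E}
    (hf : AEStronglyMeasurable f μ) {q : ℝ≥0∞} (hq : 1 ≤ q) :
    eLpNorm f q μ ≤ eLpNormEssSup f μ ^ (1 - 1 / q.toReal) * eLpNorm f 1 μ ^ (1 / q.toReal) := by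
  rcases eq_or_ne q ∞ with rfl | hq_top
  · simp
  have hp : 1 ≤ q.toReal := by simpa using toReal_mono hq_top hq
  set p := q.toReal
  have hpointwise : ∀ᵐ x ∂μ, ‖f x‖ₑ ^ p ≤ eLpNormEssSup f μ ^ (p - 1) * ‖f x‖ₑ := by
    filter_upwards [ae_le_eLpNormEssSup (f := f) (μ := μ)] with x hx
    calc ‖f x‖ₑ ^ p = ‖f x‖ₑ ^ (p - 1) * ‖f x‖ₑ ^ (1 : ℝ) := by
          rw [← ENNReal.rpow_add_of_nonneg _ _ (by linarith) zero_le_one, sub_add_cancel]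
      _ ≤ eLpNormEssSup f μ ^ (p - 1) * ‖f x‖ₑ := by
          rw [ENNReal.rpow_one]
          gcongr
  rw [eLpNorm_eq_lintegral_rpow_enorm_toReal (zero_lt_one.trans_le hq).ne' hq_top,
    eLpNorm_one_eq_lintegral_enorm]
  calc (∫⁻ x, ‖f x‖ₑ ^ p ∂μ) ^ (1 / p)
      ≤ (eLpNormEssSup f μ ^ (p - 1) * ∫⁻ x, ‖f x‖ₑ ∂μ) ^ (1 / p) := by
        rw [← lintegral_const_mul'' _ hf.enorm]
        gcongr ?_ ^ _
        exact lintegral_mono_ae hpointwise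
    _ = eLpNormEssSup f μ ^ (1 - 1 / p) * (∫⁻ x, ‖f x‖ₑ ∂μ) ^ (1 / p) := by
        rw [ENNReal.mul_rpow_of_nonneg _ _ (by positivity), ← ENNReal.rpow_mul]
        congr 2
        field_simp

end Interpolation

section SmallBalls

variable {α : Type*} [PseudoMetricSpace α] [CompleteSpace α] [SecondCountableTopology α]
  [MeasurableSpace α] [BorelSpace α]

theorem exists_pos_forall_measure_closedBall_le (ν : Measure α) [IsFiniteMeasure ν]
    [NullSingletonClass ν] {ε : ℝ≥0∞} (hε : 0 < ε) : ∃ r > 0, ∀ x, ν (closedBall x r) ≤ ε := by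
  obtain ⟨K, hK, hKε⟩ := isTightMeasureSet_iff_exists_isCompact_measure_compl_le.1
    (isTightMeasureSet_singleton (μ := ν)) ε hε
  have hU : ∀ a : α, ∃ U ⊇ {a}, IsOpen U ∧ ν U < ε := fun a =>
    Set.exists_isOpen_lt_of_lt {a} ε (by simpa using hε)
  choose U haU hUo hUε using hU
  obtain ⟨δ, hδ, hcover⟩ := lebesgue_number_lemma_of_metric hK hUo
    fun a _ => Set.mem_iUnion.2 ⟨a, haU a rfl⟩
  refine ⟨δ / 4, by positivity, fun x => ?_⟩
  by_cases hx : (closedBall x (δ / 4) ∩ K).Nonempty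
  · obtain ⟨y, hyx, hyK⟩ := hx
    obtain ⟨a, ha⟩ := hcover y hyK
    refine (measure_mono fun z hz => ha ?_).trans (hUε a).le
    rw [mem_closedBall] at hz hyx
    rw [mem_ball]
    linarith [dist_triangle_right z y x]
  · exact (measure_mono fun z hz hzK => hx ⟨z, hz, hzK⟩).trans (hKε ν rfl)

end SmallBalls

noncomputable def gaussWeight (t : ℝ) (x y : ℝ × ℝ × ℝ) : ℝ :=
  Real.exp (-(sqdist x y) / (4 * t))

lemma heatExt_eq (μ : Measure (ℝ × ℝ × ℝ)) (t : ℝ) (x : ℝ × ℝ × ℝ) :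
    heatExt μ t x = (4 * Real.pi * t) ^ (-(3 : ℝ) / 2) * ∫ y, gaussWeight t x y ∂μ :=
  rfl

lemma sqdist_nonneg (x y : ℝ × ℝ × ℝ) : 0 ≤ sqdist x y := by
  unfold sqdist
  positivity

lemma dist_le_sqrt_sqdist (x y : ℝ × ℝ × ℝ) : dist x y ≤ √(sqdist x y) := by
  simp only [Prod.dist_eq, Real.dist_eq]
  refine max_le (Real.abs_le_sqrt ?_) (max_le (Real.abs_le_sqrt ?_) (Real.abs_le_sqrt ?_)) <;>
    unfold sqdist <;> nlinarith [sq_nonneg (x.1 - y.1), sq_nonneg (x.2.1 - y.2.1),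
      sq_nonneg (x.2.2 - y.2.2)]

lemma continuous_gaussWeight (t : ℝ) :
    Continuous fun p : (ℝ × ℝ × ℝ) × (ℝ × ℝ × ℝ) => gaussWeight t p.1 p.2 := by
  unfold gaussWeight sqdist
  fun_prop

lemma gaussWeight_nonneg (t : ℝ) (x y : ℝ × ℝ × ℝ) : 0 ≤ gaussWeight t x y :=
  Real.exp_nonneg _

lemma gaussWeight_le_one {t : ℝ} (ht : 0 < t) (x y : ℝ × ℝ × ℝ) : gaussWeight t x y ≤ 1 := by
  rw [gaussWeight, Real.exp_le_one_iff, neg_div]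
  exact neg_nonpos.2 (div_nonneg (sqdist_nonneg x y) (by positivity))

lemma gaussWeight_le_of_le_dist {t r : ℝ} (ht : 0 < t) (hr : 0 ≤ r) {x y : ℝ × ℝ × ℝ}
    (h : r ≤ dist x y) : gaussWeight t x y ≤ Real.exp (-r ^ 2 / (4 * t)) := by
  unfold gaussWeight
  gcongr
  exact (Real.le_sqrt hr (sqdist_nonneg x y)).1 (h.trans (dist_le_sqrt_sqdist x y))

lemma integrable_gaussWeight (σ : Measure (ℝ × ℝ × ℝ)) [IsFiniteMeasure σ] {t : ℝ} (ht : 0 < t)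
    (x : ℝ × ℝ × ℝ) : Integrable (gaussWeight t x) σ := by
  refine (integrable_const (1 : ℝ)).mono
    ((continuous_gaussWeight t).comp (Continuous.prodMk_right x)).aestronglyMeasurable ?_
  filter_upwards with y
  rw [Real.norm_of_nonneg (gaussWeight_nonneg t x y), norm_one]
  exact gaussWeight_le_one ht x y

lemma enorm_heatExt (σ : Measure (ℝ × ℝ × ℝ)) [IsFiniteMeasure σ] {t : ℝ} (ht : 0 < t)
    (x : ℝ × ℝ × ℝ) :
    ‖heatExt σ t x‖ₑ =
      ENNReal.ofReal ((4 * Real.pi * t) ^ (-(3 : ℝ) / 2)) *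
        ∫⁻ y, ENNReal.ofReal (gaussWeight t x y) ∂σ := by
  have hc : 0 ≤ (4 * Real.pi * t) ^ (-(3 : ℝ) / 2) := by positivity
  rw [heatExt_eq, ← ofReal_norm, Real.norm_of_nonneg
      (mul_nonneg hc (integral_nonneg (gaussWeight_nonneg t x))),
    ENNReal.ofReal_mul hc, ofReal_integral_eq_lintegral_ofReal (integrable_gaussWeight σ ht x)
      (ae_of_all _ (gaussWeight_nonneg t x))]

lemma aestronglyMeasurable_heatExt (σ : Measure (ℝ × ℝ × ℝ)) [SFinite σ] (t : ℝ) :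
    AEStronglyMeasurable (heatExt σ t) volume :=
  ((continuous_gaussWeight t).stronglyMeasurable.integral_prod_right'.const_mul
    _).aestronglyMeasurable

lemma heatExt_add (ν μ : Measure (ℝ × ℝ × ℝ)) [IsFiniteMeasure ν] [IsFiniteMeasure μ]
    {t : ℝ} (ht : 0 < t) : heatExt (ν + μ) t = heatExt ν t + heatExt μ t := by
  ext x
  simp only [heatExt_eq, Pi.add_apply,
    integral_add_measure (integrable_gaussWeight ν ht x) (integrable_gaussWeight μ ht x), mul_add]

lemma lintegral_ofReal_exp_neg_sq_sub {t : ℝ} (ht : 0 < t) (c : ℝ) :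
    ∫⁻ u : ℝ, ENNReal.ofReal (Real.exp (-(u - c) ^ 2 / (4 * t))) =
      ENNReal.ofReal √(4 * Real.pi * t) := by
  simp_rw [fun u : ℝ => show -(u - c) ^ 2 / (4 * t) = -(1 / (4 * t)) * (u - c) ^ 2 by ring]
  rw [← ofReal_integral_eq_lintegral_ofReal
      ((integrable_exp_neg_mul_sq (by positivity)).comp_sub_right c)
      (ae_of_all _ fun u => Real.exp_nonneg _),
    integral_sub_right_eq_self (fun u => Real.exp (-(1 / (4 * t)) * u ^ 2)) c,
    integral_gaussian]
  congr 2
  field_simp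

lemma lintegral_gaussWeight_left {t : ℝ} (ht : 0 < t) (y : ℝ × ℝ × ℝ) :
    ∫⁻ x, ENNReal.ofReal (gaussWeight t x y) = ENNReal.ofReal √(4 * Real.pi * t) ^ 3 := by
  let G : ℝ → ℝ → ℝ≥0∞ := fun c u => ENNReal.ofReal (Real.exp (-(u - c) ^ 2 / (4 * t)))
  have hG : ∀ c, ∫⁻ u, G c u = ENNReal.ofReal √(4 * Real.pi * t) :=
    lintegral_ofReal_exp_neg_sq_sub ht
  have hfactor : ∀ x : ℝ × ℝ × ℝ,
      ENNReal.ofReal (gaussWeight t x y) = G y.1 x.1 * (G y.2.1 x.2.1 * G y.2.2 x.2.2) := by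
    intro x
    simp only [G]
    rw [← ENNReal.ofReal_mul (Real.exp_nonneg _), ← ENNReal.ofReal_mul (Real.exp_nonneg _),
      ← Real.exp_add, ← Real.exp_add, gaussWeight, sqdist]
    ring_nf
  have hG_meas : ∀ c, AEMeasurable (G c) := fun c => by fun_prop
  simp_rw [hfactor]
  calc ∫⁻ x : ℝ × ℝ × ℝ, G y.1 x.1 * (G y.2.1 x.2.1 * G y.2.2 x.2.2)
      = (∫⁻ u, G y.1 u) * ∫⁻ p : ℝ × ℝ, G y.2.1 p.1 * G y.2.2 p.2 := by
        rw [Measure.volume_eq_prod]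
        exact lintegral_prod_mul (hG_meas _)
          ((hG_meas _).comp_fst.mul (hG_meas _).comp_snd)
    _ = (∫⁻ u, G y.1 u) * ((∫⁻ u, G y.2.1 u) * ∫⁻ u, G y.2.2 u) := by
        rw [Measure.volume_eq_prod, lintegral_prod_mul (hG_meas _) (hG_meas _)]
    _ = ENNReal.ofReal √(4 * Real.pi * t) ^ 3 := by
        rw [hG, hG, hG]
        ring

lemma eLpNorm_one_heatExt (σ : Measure (ℝ × ℝ × ℝ)) [IsFiniteMeasure σ] {t : ℝ} (ht : 0 < t) :
    eLpNorm (heatExt σ t) 1 volume = σ Set.univ := by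
  have hπt : 0 < 4 * Real.pi * t := by positivity
  have hnormalize : ENNReal.ofReal ((4 * Real.pi * t) ^ (-(3 : ℝ) / 2)) *
      ENNReal.ofReal √(4 * Real.pi * t) ^ 3 = 1 := by
    rw [← ENNReal.ofReal_pow (Real.sqrt_nonneg _), ← ENNReal.ofReal_mul (by positivity),
      Real.sqrt_eq_rpow, ← Real.rpow_natCast, ← Real.rpow_mul hπt.le, ← Real.rpow_add hπt]
    norm_num
  rw [eLpNorm_one_eq_lintegral_enorm]
  simp_rw [enorm_heatExt σ ht]
  rw [lintegral_const_mul' _ _ ofReal_ne_top, lintegral_lintegral_swap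
      (continuous_gaussWeight t).measurable.ennreal_ofReal.aemeasurable]
  simp_rw [lintegral_gaussWeight_left ht]
  rw [lintegral_const, ← mul_assoc, hnormalize, one_mul]

lemma rpow_mul_heatExt_prefactor_le_one {t : ℝ} (ht : 0 < t) :
    t ^ ((3 : ℝ) / 2) * (4 * Real.pi * t) ^ (-(3 : ℝ) / 2) ≤ 1 := by
  rw [Real.mul_rpow (by positivity) ht.le, mul_left_comm, ← Real.rpow_add ht,
    show (3 : ℝ) / 2 + -3 / 2 = 0 by norm_num, Real.rpow_zero, mul_one]
  exact Real.rpow_le_one_of_one_le_of_nonpos (by nlinarith [Real.pi_gt_three]) (by norm_num)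

lemma ofReal_rpow_mul_eLpNormEssSup_heatExt_le (σ : Measure (ℝ × ℝ × ℝ)) [IsFiniteMeasure σ]
    {t : ℝ} (ht : 0 < t) {B : ℝ≥0∞} (hB : ∀ x, ∫⁻ y, ENNReal.ofReal (gaussWeight t x y) ∂σ ≤ B) :
    ENNReal.ofReal (t ^ ((3 : ℝ) / 2)) * eLpNormEssSup (heatExt σ t) volume ≤ B := by
  have hscale : ∀ x, ENNReal.ofReal (t ^ ((3 : ℝ) / 2)) * ‖heatExt σ t x‖ₑ ≤ B := fun x =>
    calc ENNReal.ofReal (t ^ ((3 : ℝ) / 2)) * ‖heatExt σ t x‖ₑ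
        = ENNReal.ofReal (t ^ ((3 : ℝ) / 2) * (4 * Real.pi * t) ^ (-(3 : ℝ) / 2)) *
            ∫⁻ y, ENNReal.ofReal (gaussWeight t x y) ∂σ := by
          rw [enorm_heatExt σ ht, ← mul_assoc, ENNReal.ofReal_mul (by positivity)]
      _ ≤ 1 * B := by
          gcongr
          · exact ENNReal.ofReal_le_one.2 (rpow_mul_heatExt_prefactor_le_one ht)
          · exact hB x
      _ = B := one_mul B
  rw [← Real.enorm_eq_ofReal (by positivity), ← eLpNormEssSup_const_smul]
  refine eLpNormEssSup_le_of_ae_enorm_bound (ae_of_all _ fun x => ?_)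
  rw [Pi.smul_apply, enorm_smul, Real.enorm_eq_ofReal (by positivity)]
  exact hscale x

lemma lintegral_gaussWeight_le_measure_univ (σ : Measure (ℝ × ℝ × ℝ)) {t : ℝ} (ht : 0 < t)
    (x : ℝ × ℝ × ℝ) : ∫⁻ y, ENNReal.ofReal (gaussWeight t x y) ∂σ ≤ σ Set.univ :=
  (lintegral_mono fun y => ENNReal.ofReal_le_one.2 (gaussWeight_le_one ht x y)).trans_eq
    (by simp)

lemma lintegral_gaussWeight_le_closedBall (σ : Measure (ℝ × ℝ × ℝ)) {t r : ℝ} (ht : 0 < t)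
    (hr : 0 ≤ r) (x : ℝ × ℝ × ℝ) :
    ∫⁻ y, ENNReal.ofReal (gaussWeight t x y) ∂σ ≤
      σ (closedBall x r) + ENNReal.ofReal (Real.exp (-r ^ 2 / (4 * t))) * σ Set.univ := by
  have hsplit : ∀ y, ENNReal.ofReal (gaussWeight t x y) ≤
      (closedBall x r).indicator 1 y + ENNReal.ofReal (Real.exp (-r ^ 2 / (4 * t))) := by
    intro y
    by_cases hy : y ∈ closedBall x r
    · simp only [Set.indicator_of_mem hy, Pi.one_apply]
      exact (ENNReal.ofReal_le_one.2 (gaussWeight_le_one ht x y)).trans le_self_add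
    · rw [Set.indicator_of_notMem hy, zero_add]
      rw [mem_closedBall, not_le, dist_comm] at hy
      exact ENNReal.ofReal_le_ofReal (gaussWeight_le_of_le_dist ht hr hy.le)
  calc ∫⁻ y, ENNReal.ofReal (gaussWeight t x y) ∂σ
      ≤ ∫⁻ y, (closedBall x r).indicator 1 y + ENNReal.ofReal (Real.exp (-r ^ 2 / (4 * t))) ∂σ :=
        lintegral_mono hsplit
    _ = σ (closedBall x r) + ENNReal.ofReal (Real.exp (-r ^ 2 / (4 * t))) * σ Set.univ := by
        rw [lintegral_add_right _ measurable_const,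
          lintegral_indicator_one measurableSet_closedBall, lintegral_const, mul_comm]

lemma tendsto_ofReal_exp_neg_sq_div_mul_nhdsGT_zero {r : ℝ} (hr : 0 < r) {m : ℝ≥0∞}
    (hm : m ≠ ∞) :
    Tendsto (fun t : ℝ => ENNReal.ofReal (Real.exp (-r ^ 2 / (4 * t))) * m) (𝓝[>] 0) (𝓝 0) := by
  have hexponent : Tendsto (fun t : ℝ => -r ^ 2 / (4 * t)) (𝓝[>] 0) atBot := by
    refine (tendsto_inv_nhdsGT_zero.const_mul_atTop_of_neg (r := -r ^ 2 / 4)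
      (by nlinarith)).congr fun t => ?_
    ring
  simpa using ENNReal.Tendsto.mul_const
    (ENNReal.tendsto_ofReal (Real.tendsto_exp_atBot.comp hexponent)) (Or.inr hm)

theorem tendsto_ofReal_rpow_mul_eLpNormEssSup_heatExt (ν : Measure (ℝ × ℝ × ℝ))
    [IsFiniteMeasure ν] [NullSingletonClass ν] :
    Tendsto (fun t : ℝ => ENNReal.ofReal (t ^ ((3 : ℝ) / 2)) *
      eLpNormEssSup (heatExt ν t) volume) (𝓝[>] 0) (𝓝 0) := by
  refine ENNReal.tendsto_nhds_zero.2 fun ε hε => ?_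
  obtain ⟨r, hr, hball⟩ := exists_pos_forall_measure_closedBall_le ν (ENNReal.half_pos hε.ne')
  filter_upwards [self_mem_nhdsWithin, (tendsto_ofReal_exp_neg_sq_div_mul_nhdsGT_zero hr
    (measure_ne_top ν _)).eventually (eventually_le_nhds (ENNReal.half_pos hε.ne'))]
    with t ht htail
  refine ofReal_rpow_mul_eLpNormEssSup_heatExt_le ν ht fun x => ?_
  calc ∫⁻ y, ENNReal.ofReal (gaussWeight t x y) ∂ν
      ≤ ν (closedBall x r) + ENNReal.ofReal (Real.exp (-r ^ 2 / (4 * t))) * ν Set.univ :=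
        lintegral_gaussWeight_le_closedBall ν ht hr.le x
    _ ≤ ε / 2 + ε / 2 := add_le_add (hball x) htail
    _ = ε := ENNReal.add_halves ε

lemma ofReal_rpow_mul_eLpNorm_heatExt_le (σ : Measure (ℝ × ℝ × ℝ)) [IsFiniteMeasure σ]
    {q : ℝ≥0∞} (hq : 1 ≤ q) {t : ℝ} (ht : 0 < t) :
    ENNReal.ofReal (t ^ ((3 / 2) * (1 - 1 / q.toReal))) * eLpNorm (heatExt σ t) q volume ≤
      (ENNReal.ofReal (t ^ ((3 : ℝ) / 2)) * eLpNormEssSup (heatExt σ t) volume) ^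
        (1 - 1 / q.toReal) * σ Set.univ ^ (1 / q.toReal) := by
  have hθ : 0 ≤ 1 - 1 / q.toReal := sub_nonneg.2 (one_div_toReal_le_one hq)
  calc ENNReal.ofReal (t ^ ((3 / 2) * (1 - 1 / q.toReal))) * eLpNorm (heatExt σ t) q volume
      ≤ ENNReal.ofReal (t ^ ((3 / 2) * (1 - 1 / q.toReal))) *
          (eLpNormEssSup (heatExt σ t) volume ^ (1 - 1 / q.toReal) *
            eLpNorm (heatExt σ t) 1 volume ^ (1 / q.toReal)) := by
        gcongr
        exact eLpNorm_le_eLpNormEssSup_rpow_mul_eLpNorm_one_rpow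
          (aestronglyMeasurable_heatExt σ t) hq
    _ = (ENNReal.ofReal (t ^ ((3 : ℝ) / 2)) * eLpNormEssSup (heatExt σ t) volume) ^
          (1 - 1 / q.toReal) * σ Set.univ ^ (1 / q.toReal) := by
        rw [ENNReal.mul_rpow_of_nonneg _ _ hθ, Real.rpow_mul ht.le,
          ENNReal.ofReal_rpow_of_nonneg (by positivity) hθ, eLpNorm_one_heatExt σ ht, mul_assoc]

lemma ofReal_rpow_mul_eLpNorm_heatExt_le_measure_univ (σ : Measure (ℝ × ℝ × ℝ))
    [IsFiniteMeasure σ] {q : ℝ≥0∞} (hq : 1 ≤ q) {t : ℝ} (ht : 0 < t) :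
    ENNReal.ofReal (t ^ ((3 / 2) * (1 - 1 / q.toReal))) * eLpNorm (heatExt σ t) q volume ≤
      σ Set.univ := by
  refine (ofReal_rpow_mul_eLpNorm_heatExt_le σ hq ht).trans ?_
  calc (ENNReal.ofReal (t ^ ((3 : ℝ) / 2)) * eLpNormEssSup (heatExt σ t) volume) ^
          (1 - 1 / q.toReal) * σ Set.univ ^ (1 / q.toReal)
      ≤ σ Set.univ ^ (1 - 1 / q.toReal) * σ Set.univ ^ (1 / q.toReal) := by
        gcongr
        · exact sub_nonneg.2 (one_div_toReal_le_one hq)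
        · exact ofReal_rpow_mul_eLpNormEssSup_heatExt_le σ ht
            (lintegral_gaussWeight_le_measure_univ σ ht)
    _ = σ Set.univ := by
        rw [← ENNReal.rpow_add_of_nonneg _ _ (sub_nonneg.2 (one_div_toReal_le_one hq))
          (by positivity), sub_add_cancel, ENNReal.rpow_one]

theorem tendsto_ofReal_rpow_mul_eLpNorm_heatExt (ν : Measure (ℝ × ℝ × ℝ)) [IsFiniteMeasure ν]
    [NullSingletonClass ν] {q : ℝ≥0∞} (hq : 1 < q) :
    Tendsto (fun t : ℝ => ENNReal.ofReal (t ^ ((3 / 2) * (1 - 1 / q.toReal))) *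
      eLpNorm (heatExt ν t) q volume) (𝓝[>] 0) (𝓝 0) := by
  have hθ : 0 < 1 - 1 / q.toReal := sub_pos.2 (one_div_toReal_lt_one hq)
  have hbound : Tendsto (fun t : ℝ =>
      (ENNReal.ofReal (t ^ ((3 : ℝ) / 2)) * eLpNormEssSup (heatExt ν t) volume) ^
        (1 - 1 / q.toReal) * ν Set.univ ^ (1 / q.toReal)) (𝓝[>] 0) (𝓝 0) := by
    have hpow := ((ENNReal.continuous_rpow_const (y := 1 - 1 / q.toReal)).tendsto 0).comp
      (tendsto_ofReal_rpow_mul_eLpNormEssSup_heatExt ν)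
    rw [ENNReal.zero_rpow_of_pos hθ] at hpow
    simpa using ENNReal.Tendsto.mul_const hpow
      (Or.inr (ENNReal.rpow_ne_top_of_nonneg (by positivity) (measure_ne_top ν _)))
  refine tendsto_of_tendsto_of_tendsto_of_le_of_le' tendsto_const_nhds hbound
    (Eventually.of_forall fun _ => bot_le) ?_
  filter_upwards [self_mem_nhdsWithin] with t ht
  exact ofReal_rpow_mul_eLpNorm_heatExt_le ν hq.le ht

/-- For a finite measure `μ = ν + μ_pp` on `ℝ³` (with `ν = μ_ac + μ_sc` the non-atomic
part and `μ_pp` the atomic part of the Lebesgue decomposition), for every `q ∈ (1,∞]`: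
`limsup_{t→0} t^{(3/2)(1-1/q)} ‖e^{tΔ}μ‖_{L^q(ℝ³)} ≤ C ‖μ_pp‖`, `C` depending only on `q`. -/
theorem heatExt_limsup_le_atomic_part (q : ℝ≥0∞) (hq : 1 < q) :
    ∃ C : ℝ, 0 < C ∧ ∀ ν μpp : Measure (ℝ × ℝ × ℝ), IsFiniteMeasure ν →
      IsFiniteMeasure μpp → NoAtoms ν → IsPurelyAtomic μpp →
        Filter.limsup
            (fun t : ℝ =>
              ENNReal.ofReal (t ^ ((3 / 2) * (1 - 1 / q.toReal))) *
                eLpNorm (heatExt (ν + μpp) t) q volume)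
            (nhdsWithin 0 (Set.Ioi 0)) ≤
          ENNReal.ofReal C * μpp Set.univ := by
  refine ⟨1, one_pos, fun ν μpp _ _ hν _ => ?_⟩
  have : NullSingletonClass ν := hν
  rw [ENNReal.ofReal_one, one_mul]
  have hsplit : ∀ᶠ t in 𝓝[>] 0,
      ENNReal.ofReal (t ^ ((3 / 2) * (1 - 1 / q.toReal))) *
          eLpNorm (heatExt (ν + μpp) t) q volume ≤
        ENNReal.ofReal (t ^ ((3 / 2) * (1 - 1 / q.toReal))) * eLpNorm (heatExt ν t) q volume +
          μpp Set.univ := by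
    filter_upwards [self_mem_nhdsWithin] with t (ht : 0 < t)
    rw [heatExt_add ν μpp ht]
    refine (mul_le_mul_right (eLpNorm_add_le (aestronglyMeasurable_heatExt ν t)
      (aestronglyMeasurable_heatExt μpp t) hq.le) _).trans ?_
    rw [mul_add]
    gcongr
    exact ofReal_rpow_mul_eLpNorm_heatExt_le_measure_univ μpp hq.le ht
  calc _ ≤ limsup (fun t : ℝ => ENNReal.ofReal (t ^ ((3 / 2) * (1 - 1 / q.toReal))) *
          eLpNorm (heatExt ν t) q volume + μpp Set.univ) (𝓝[>] 0) := limsup_le_limsup hsplit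
    _ = μpp Set.univ := by
        simpa using
          ((tendsto_ofReal_rpow_mul_eLpNorm_heatExt ν hq).add_const (μpp Set.univ)).limsup_eq
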